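/- Assume α=γ and 0<α,β<1. For integers 0≤ℓ≤k, the base value of the graph F_ℓ formed by two k-cycles overlapping in a path of ℓ consecutive edges equals ½[(α+β)^{2k−ℓ} + (α+β)^ℓ (α−β)^{2k−2ℓ} + 2(α+β)^{k−ℓ}(α−β)^k]. -/
import Mathlib


open Finset

/-- The entry of the 2×2 matrix `P` with `α = γ`:
`P_{1,1}=P_{0,0}=α`, `P_{1,0}=P_{0,1}=β`. -/
def Pm (α β : ℝ) : Bool → Bool → ℝ
  | true, true => α
  | true, false => β
  | false, true => β
  | false, false => α

/-- The contribution of a labeled path: `y : Fin (m+1) → Bool` labels the `m+1`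
vertices of a path with `m` edges, and the contribution is the product of the
matrix entries over its `m` edges. -/
def pathProd (α β : ℝ) {m : ℕ} (y : Fin (m + 1) → Bool) : ℝ :=
  ∏ i : Fin m, Pm α β (y i.castSucc) (y i.succ)

noncomputable def S (α β : ℝ) (m : ℕ) (a b : Bool) : ℝ :=
  ∑ y : Fin (m + 1) → Bool,
    if y 0 = a ∧ y (Fin.last m) = b then pathProd α β y else 0

lemma pathProd_cons (α β : ℝ) {m : ℕ} (c : Bool) (y : Fin (m + 1) → Bool) :
    pathProd α β (Fin.cons c y) = Pm α β c (y 0) * pathProd α β y := by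
  unfold pathProd
  rw [Fin.prod_univ_succ]
  simp [← Fin.succ_castSucc]

lemma S_succ (α β : ℝ) (m : ℕ) (a b : Bool) :
    S α β (m + 1) a b = ∑ c : Bool, Pm α β a c * S α β m c b := by
  rw [S]
  rw [← Equiv.sum_comp (Fin.consEquiv (fun _ : Fin (m + 2) => Bool))]
  rw [Fintype.sum_prod_type]
  have hce : ∀ (c : Bool) (x : Fin (m + 1) → Bool),
      (Fin.consEquiv (fun _ : Fin (m + 2) => Bool)) (c, x) = Fin.cons c x := fun _ _ => rfl
  simp only [hce, Fin.cons_zero, ← Fin.succ_last, Fin.cons_succ,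
    pathProd_cons]
  simp only [S, Finset.mul_sum]
  conv_lhs => rw [Finset.sum_comm]
  conv_rhs => rw [Finset.sum_comm]
  refine Finset.sum_congr rfl fun x _ => ?_
  rw [Fintype.sum_bool, Fintype.sum_bool]
  cases a <;> cases hx : x 0 <;> by_cases hb : x (Fin.last m) = b <;>
    simp [hx, hb]

lemma S_eq (α β : ℝ) (m : ℕ) (a b : Bool) :
    S α β m a b = ((α + β) ^ m + (if a = b then 1 else -1) * (α - β) ^ m) / 2 := by
  induction m generalizing a b with
  | zero =>
    rw [S, ← Equiv.sum_comp (Equiv.funUnique (Fin 1) Bool).symm]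
    cases a <;> cases b <;>
      simp [Fintype.sum_bool, pathProd, Fin.last, Equiv.funUnique]
  | succ m ih =>
    rw [S_succ, Fintype.sum_bool, ih, ih]
    cases a <;> cases b <;> simp [Pm] <;> ring

lemma split_ite (x y z : ℝ) (u₁ u₂ u₃ v₁ v₂ v₃ : Bool) :
    (if u₂ = u₁ ∧ u₃ = u₁ ∧ v₂ = v₁ ∧ v₃ = v₁ then x * y * z else 0)
      = ∑ p : Bool × Bool,
          (if u₁ = p.1 ∧ v₁ = p.2 then x else 0) *
            (if u₂ = p.1 ∧ v₂ = p.2 then y else 0) *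
            (if u₃ = p.1 ∧ v₃ = p.2 then z else 0) := by
  rw [Fintype.sum_prod_type]
  cases u₁ <;> cases u₂ <;> cases u₃ <;> cases v₁ <;> cases v₂ <;> cases v₃ <;>
    simp [Fintype.sum_bool]

lemma sum_comm4 {A B C D : Type*} [Fintype A] [Fintype B] [Fintype C] [Fintype D]
    (f : A → B → C → D → ℝ) :
    ∑ a : A, ∑ b : B, ∑ c : C, ∑ d : D, f a b c d
      = ∑ d : D, ∑ a : A, ∑ b : B, ∑ c : C, f a b c d :=
  calc ∑ a : A, ∑ b : B, ∑ c : C, ∑ d : D, f a b c d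
      = ∑ a : A, ∑ b : B, ∑ d : D, ∑ c : C, f a b c d :=
        Finset.sum_congr rfl fun _ _ => Finset.sum_congr rfl fun _ _ => Finset.sum_comm
    _ = ∑ a : A, ∑ d : D, ∑ b : B, ∑ c : C, f a b c d :=
        Finset.sum_congr rfl fun _ _ => Finset.sum_comm
    _ = ∑ d : D, ∑ a : A, ∑ b : B, ∑ c : C, f a b c d := Finset.sum_comm

lemma main_aux (α β : ℝ) (ℓ m : ℕ) :
    ∑ y₁ : Fin (ℓ + 1) → Bool, ∑ y₂ : Fin (m + 1) → Bool,
      ∑ y₃ : Fin (m + 1) → Bool,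
        (if y₂ 0 = y₁ 0 ∧ y₃ 0 = y₁ 0 ∧ y₂ (Fin.last m) = y₁ (Fin.last ℓ)
            ∧ y₃ (Fin.last m) = y₁ (Fin.last ℓ)
          then pathProd α β y₁ * pathProd α β y₂ * pathProd α β y₃ else 0)
      = (1 / 2) * ((α + β) ^ (ℓ + (m + m))
          + (α + β) ^ ℓ * (α - β) ^ (m + m)
          + 2 * (α + β) ^ m * (α - β) ^ (ℓ + m)) := by
  calc
    ∑ y₁ : Fin (ℓ + 1) → Bool, ∑ y₂ : Fin (m + 1) → Bool, ∑ y₃ : Fin (m + 1) → Bool,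
        (if y₂ 0 = y₁ 0 ∧ y₃ 0 = y₁ 0 ∧ y₂ (Fin.last m) = y₁ (Fin.last ℓ)
            ∧ y₃ (Fin.last m) = y₁ (Fin.last ℓ)
          then pathProd α β y₁ * pathProd α β y₂ * pathProd α β y₃ else 0)
      = ∑ y₁ : Fin (ℓ + 1) → Bool, ∑ y₂ : Fin (m + 1) → Bool, ∑ y₃ : Fin (m + 1) → Bool,
          ∑ p : Bool × Bool,
            (if y₁ 0 = p.1 ∧ y₁ (Fin.last ℓ) = p.2 then pathProd α β y₁ else 0) *
              (if y₂ 0 = p.1 ∧ y₂ (Fin.last m) = p.2 then pathProd α β y₂ else 0) *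
              (if y₃ 0 = p.1 ∧ y₃ (Fin.last m) = p.2 then pathProd α β y₃ else 0) := by
        refine Finset.sum_congr rfl fun y₁ _ => Finset.sum_congr rfl fun y₂ _ =>
          Finset.sum_congr rfl fun y₃ _ => ?_
        exact split_ite _ _ _ _ _ _ _ _ _
    _ = ∑ p : Bool × Bool, ∑ y₁ : Fin (ℓ + 1) → Bool, ∑ y₂ : Fin (m + 1) → Bool,
          ∑ y₃ : Fin (m + 1) → Bool,
            (if y₁ 0 = p.1 ∧ y₁ (Fin.last ℓ) = p.2 then pathProd α β y₁ else 0) *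
              (if y₂ 0 = p.1 ∧ y₂ (Fin.last m) = p.2 then pathProd α β y₂ else 0) *
              (if y₃ 0 = p.1 ∧ y₃ (Fin.last m) = p.2 then pathProd α β y₃ else 0) := by
        exact sum_comm4 _
    _ = ∑ p : Bool × Bool, S α β ℓ p.1 p.2 * S α β m p.1 p.2 * S α β m p.1 p.2 := by
        refine Finset.sum_congr rfl fun p _ => ?_
        simp only [S, ← Finset.mul_sum, ← Finset.sum_mul]
    _ = (1 / 2) * ((α + β) ^ (ℓ + (m + m))
          + (α + β) ^ ℓ * (α - β) ^ (m + m)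
          + 2 * (α + β) ^ m * (α - β) ^ (ℓ + m)) := by
        rw [Fintype.sum_prod_type, Fintype.sum_bool, Fintype.sum_bool, Fintype.sum_bool]
        simp only [S_eq]
        simp only [pow_add]
        norm_num
        ring

/-- With `α = γ`, the base value of the graph `F_ℓ` formed by two `k`-cycles
overlapping in a path of `ℓ` consecutive edges (equivalently, two vertices
joined by three internally disjoint paths of lengths `ℓ`, `k−ℓ`, `k−ℓ`) equals
`½[(α+β)^{2k−ℓ} + (α+β)^ℓ (α−β)^{2k−2ℓ} + 2(α+β)^{k−ℓ}(α−β)^k]`.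
A labeling of `F_ℓ` is exactly a triple of labeled paths with matching
endpoints, and its contribution is the product of the three path contributions. -/
theorem baseVal_two_overlapping_cycles (α β : ℝ) (hα0 : 0 < α) (hα1 : α < 1)
    (hβ0 : 0 < β) (hβ1 : β < 1) (k ℓ : ℕ) (hℓk : ℓ ≤ k) :
    ∑ y₁ : Fin (ℓ + 1) → Bool, ∑ y₂ : Fin (k - ℓ + 1) → Bool,
      ∑ y₃ : Fin (k - ℓ + 1) → Bool,
        (if y₂ 0 = y₁ 0 ∧ y₃ 0 = y₁ 0 ∧ y₂ (Fin.last (k - ℓ)) = y₁ (Fin.last ℓ)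
            ∧ y₃ (Fin.last (k - ℓ)) = y₁ (Fin.last ℓ)
          then pathProd α β y₁ * pathProd α β y₂ * pathProd α β y₃ else 0)
      = (1 / 2) * ((α + β) ^ (2 * k - ℓ)
          + (α + β) ^ ℓ * (α - β) ^ (2 * k - 2 * ℓ)
          + 2 * (α + β) ^ (k - ℓ) * (α - β) ^ k) := by
  rw [show 2 * k - ℓ = ℓ + ((k - ℓ) + (k - ℓ)) from by omega,
    show 2 * k - 2 * ℓ = (k - ℓ) + (k - ℓ) from by omega,
    show (α - β) ^ k = (α - β) ^ (ℓ + (k - ℓ)) from by rw [Nat.add_sub_cancel' hℓk]]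
  exact main_aux α β ℓ (k - ℓ)
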